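/- arXiv:2204.07122 — 2 statements merged into one kernel-verified Lean document; each statement's English description precedes it below -/
import Mathlib

section
/- For random vectors x = (x₁,…,x_n) and y = (y₁,…,y_n) in ℝⁿ whose laws are product measures (i.e., coordinates independent), the squared 2-Wasserstein distance satisfies W₂²(x, y) = Σᵢ W₂²(xᵢ, yᵢ). -/
open MeasureTheory

/-- Squared 2-Wasserstein distance with cost `c`, as the infimum of expected cost
over all couplings. -/
noncomputable def W2sq {E : Type*} [MeasurableSpace E] (c : E → E → ℝ)
    (μ ν : Measure E) : ℝ :=
  sInf { r : ℝ | ∃ π : Measure (E × E), IsProbabilityMeasure π ∧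
    π.map Prod.fst = μ ∧ π.map Prod.snd = ν ∧ r = ∫ p, c p.1 p.2 ∂π }

lemma map_eval_pi' {ι : Type*} [Fintype ι] {α : ι → Type*} [∀ i, MeasurableSpace (α i)]
    (μ : ∀ i, Measure (α i)) [∀ i, IsProbabilityMeasure (μ i)] (i : ι) :
    (Measure.pi μ).map (Function.eval i) = μ i := by
  classical
  ext s hs
  rw [Measure.map_apply (measurable_pi_apply i) hs]
  have h : Function.eval i ⁻¹' s
      = Set.pi Set.univ (Function.update (fun j => (Set.univ : Set (α j))) i s) := by
    ext x
    simp only [Set.mem_preimage, Set.mem_pi, Set.mem_univ, forall_true_left]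
    constructor
    · intro hx j
      by_cases hj : j = i
      · subst hj; simpa using hx
      · simp [Function.update_of_ne hj]
    · intro hx
      have := hx i
      simpa using this
  rw [h, Measure.pi_pi]
  rw [Finset.prod_eq_single i]
  · simp
  · intro j _ hj; simp [Function.update_of_ne hj]
  · simp

lemma integrable_cost {μ ν : Measure ℝ} [IsProbabilityMeasure μ] [IsProbabilityMeasure ν]
    (hμ2 : Integrable (fun x => x ^ 2) μ) (hν2 : Integrable (fun x => x ^ 2) ν)
    {E : Type*} [MeasurableSpace E] (π : Measure E) [IsProbabilityMeasure π]
    {f g : E → ℝ} (hf : Measurable f) (hg : Measurable g)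
    (h1 : π.map f = μ) (h2 : π.map g = ν) :
    Integrable (fun p => (f p - g p) ^ 2) π := by
  have hif : Integrable (fun p => (f p) ^ 2) π := by
    rw [← h1] at hμ2
    exact (integrable_map_measure (by fun_prop) hf.aemeasurable).mp hμ2
  have hig : Integrable (fun p => (g p) ^ 2) π := by
    rw [← h2] at hν2
    exact (integrable_map_measure (by fun_prop) hg.aemeasurable).mp hν2
  refine Integrable.mono' ((hif.const_mul 2).add (hig.const_mul 2))
    (((hf.sub hg).pow_const 2).aestronglyMeasurable) ?_
  filter_upwards with p
  rw [Real.norm_eq_abs, abs_of_nonneg (sq_nonneg _)]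
  simp only [Pi.add_apply]
  nlinarith [sq_nonneg (f p + g p)]

/-- For product measures on `ℝⁿ` (independent coordinates) with finite second
moments, the squared 2-Wasserstein distance with Euclidean cost tensorizes:
`W₂²(x, y) = Σᵢ W₂²(xᵢ, yᵢ)`. -/
theorem w2sq_pi (n : ℕ) (μ ν : Fin n → Measure ℝ)
    (hμ : ∀ i, IsProbabilityMeasure (μ i)) (hν : ∀ i, IsProbabilityMeasure (ν i))
    (hμ2 : ∀ i, Integrable (fun x => x ^ 2) (μ i))
    (hν2 : ∀ i, Integrable (fun x => x ^ 2) (ν i)) :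
    W2sq (fun x y : Fin n → ℝ => ∑ i, (x i - y i) ^ 2)
        (Measure.pi μ) (Measure.pi ν)
      = ∑ i, W2sq (fun x y : ℝ => (x - y) ^ 2) (μ i) (ν i) := by
  classical
  haveI : ∀ i, IsProbabilityMeasure (μ i) := hμ
  haveI : ∀ i, IsProbabilityMeasure (ν i) := hν
  set Si : Fin n → Set ℝ := fun i => { r : ℝ | ∃ π : Measure (ℝ × ℝ), IsProbabilityMeasure π ∧
    π.map Prod.fst = μ i ∧ π.map Prod.snd = ν i ∧ r = ∫ p, (p.1 - p.2) ^ 2 ∂π } with hSidef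
  have hW : ∀ i, W2sq (fun x y : ℝ => (x - y) ^ 2) (μ i) (ν i) = sInf (Si i) := fun i => rfl
  set S : Set ℝ := { r : ℝ | ∃ π : Measure ((Fin n → ℝ) × (Fin n → ℝ)), IsProbabilityMeasure π ∧
    π.map Prod.fst = Measure.pi μ ∧ π.map Prod.snd = Measure.pi ν ∧
    r = ∫ p, ∑ i, (p.1 i - p.2 i) ^ 2 ∂π } with hSdef
  have hWS : W2sq (fun x y : Fin n → ℝ => ∑ i, (x i - y i) ^ 2)
      (Measure.pi μ) (Measure.pi ν) = sInf S := rfl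
  have hSiN : ∀ i, (Si i).Nonempty := by
    intro i
    refine ⟨_, (μ i).prod (ν i), inferInstance, ?_, ?_, rfl⟩
    · simp [Measure.map_fst_prod]
    · simp [Measure.map_snd_prod]
  have hSiB : ∀ i, BddBelow (Si i) := by
    intro i
    refine ⟨0, fun r hr => ?_⟩
    obtain ⟨p, _, _, _, rfl⟩ := hr
    exact integral_nonneg fun q => sq_nonneg _
  have hSB : BddBelow S := by
    refine ⟨0, fun r hr => ?_⟩
    obtain ⟨p, _, _, _, rfl⟩ := hr
    exact integral_nonneg fun q => Finset.sum_nonneg fun i _ => sq_nonneg _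
  have hSN : S.Nonempty := by
    refine ⟨_, (Measure.pi μ).prod (Measure.pi ν), inferInstance, ?_, ?_, rfl⟩
    · simp [Measure.map_fst_prod]
    · simp [Measure.map_snd_prod]
  rw [hWS]
  simp only [hW]
  refine le_antisymm (le_of_forall_pos_le_add fun ε hε => ?_) (le_csInf hSN ?_)
  · -- upper bound
    have key : ∀ i : Fin n, ∃ p : Measure (ℝ × ℝ), IsProbabilityMeasure p ∧
        p.map Prod.fst = μ i ∧ p.map Prod.snd = ν i ∧
        ∫ q, (q.1 - q.2) ^ 2 ∂p ≤ sInf (Si i) + ε / n := by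
      intro i
      have hn : (0:ℝ) < n := by exact_mod_cast i.pos
      have hlt : sInf (Si i) < sInf (Si i) + ε / n :=
        lt_add_of_pos_right _ (div_pos hε hn)
      obtain ⟨r, hr, hrlt⟩ := exists_lt_of_csInf_lt (hSiN i) hlt
      obtain ⟨p, hp, h1, h2, rfl⟩ := hr
      exact ⟨p, hp, h1, h2, hrlt.le⟩
    choose p hp h1 h2 h3 using key
    haveI : ∀ i, IsProbabilityMeasure (p i) := hp
    set T : (Fin n → ℝ × ℝ) → (Fin n → ℝ) × (Fin n → ℝ) :=
      fun f => (fun i => (f i).1, fun i => (f i).2) with hTdef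
    have hT : Measurable T := by
      apply Measurable.prodMk <;> exact measurable_pi_iff.mpr fun i => by fun_prop
    set PP : Measure ((Fin n → ℝ) × (Fin n → ℝ)) := (Measure.pi p).map T with hPPdef
    haveI : IsProbabilityMeasure PP := Measure.isProbabilityMeasure_map hT.aemeasurable
    have hfst : PP.map Prod.fst = Measure.pi μ := by
      rw [hPPdef, Measure.map_map measurable_fst hT]
      exact (measurePreserving_pi p μ (fun i => ⟨measurable_fst, h1 i⟩)).map_eq
    have hsnd : PP.map Prod.snd = Measure.pi ν := by
      rw [hPPdef, Measure.map_map measurable_snd hT]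
      exact (measurePreserving_pi p ν (fun i => ⟨measurable_snd, h2 i⟩)).map_eq
    have hmapi : ∀ i, (Measure.pi p).map (fun f => f i) = p i := fun i => map_eval_pi' p i
    have hmarg1 : ∀ i, (Measure.pi p).map (fun f => (f i).1) = μ i := by
      intro i
      have e : (fun f : Fin n → ℝ × ℝ => (f i).1) = Prod.fst ∘ (fun f => f i) := rfl
      rw [e, ← Measure.map_map measurable_fst (measurable_pi_apply i), hmapi i, h1 i]
    have hmarg2 : ∀ i, (Measure.pi p).map (fun f => (f i).2) = ν i := by
      intro i
      have e : (fun f : Fin n → ℝ × ℝ => (f i).2) = Prod.snd ∘ (fun f => f i) := rfl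
      rw [e, ← Measure.map_map measurable_snd (measurable_pi_apply i), hmapi i, h2 i]
    have hint : ∀ i, Integrable (fun f : Fin n → ℝ × ℝ => ((f i).1 - (f i).2) ^ 2)
        (Measure.pi p) := fun i =>
      integrable_cost (hμ2 i) (hν2 i) _ (measurable_fst.comp (measurable_pi_apply i))
        (measurable_snd.comp (measurable_pi_apply i)) (hmarg1 i) (hmarg2 i)
    have hIeq : ∫ q, ∑ i, (q.1 i - q.2 i) ^ 2 ∂PP = ∑ i, ∫ q : ℝ × ℝ, (q.1 - q.2) ^ 2 ∂(p i) := by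
      have hsm : Measurable (fun q : (Fin n → ℝ) × (Fin n → ℝ) => ∑ i, (q.1 i - q.2 i) ^ 2) :=
        Finset.measurable_sum _ fun i _ =>
          (((measurable_pi_apply i).comp measurable_fst).sub
            ((measurable_pi_apply i).comp measurable_snd)).pow_const 2
      rw [hPPdef, integral_map hT.aemeasurable hsm.aestronglyMeasurable]
      have : (fun f : Fin n → ℝ × ℝ => ∑ i, ((T f).1 i - (T f).2 i) ^ 2)
          = fun f => ∑ i, ((f i).1 - (f i).2) ^ 2 := rfl
      rw [this, integral_finset_sum _ (fun i _ => hint i)]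
      refine Finset.sum_congr rfl fun i _ => ?_
      rw [← hmapi i, integral_map (measurable_pi_apply i).aemeasurable
        ((measurable_fst.sub measurable_snd).pow_const 2).aestronglyMeasurable]
    have hmem : (∑ i, ∫ q : ℝ × ℝ, (q.1 - q.2) ^ 2 ∂(p i)) ∈ S :=
      ⟨PP, inferInstance, hfst, hsnd, hIeq.symm⟩
    calc sInf S ≤ ∑ i, ∫ q : ℝ × ℝ, (q.1 - q.2) ^ 2 ∂(p i) := csInf_le hSB hmem
      _ ≤ ∑ i, (sInf (Si i) + ε / n) := Finset.sum_le_sum fun i _ => h3 i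
      _ ≤ ∑ i, sInf (Si i) + ε := by
          rw [Finset.sum_add_distrib]
          gcongr
          rw [Finset.sum_const, Finset.card_univ, Fintype.card_fin, nsmul_eq_mul]
          rcases Nat.eq_zero_or_pos n with h | h
          · simp [h]; positivity
          · rw [mul_div_cancel₀]
            exact_mod_cast h.ne'
  · -- lower bound
    rintro r ⟨π, hπ, hfst, hsnd, rfl⟩
    haveI := hπ
    set m : Fin n → ((Fin n → ℝ) × (Fin n → ℝ)) → ℝ × ℝ := fun i q => (q.1 i, q.2 i) with hmdef
    have hm : ∀ i, Measurable (m i) := fun i =>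
      ((measurable_pi_apply i).comp measurable_fst).prodMk
        ((measurable_pi_apply i).comp measurable_snd)
    have hmarg1 : ∀ i, π.map (fun q : (Fin n → ℝ) × (Fin n → ℝ) => q.1 i) = μ i := by
      intro i
      have e : (fun q : (Fin n → ℝ) × (Fin n → ℝ) => q.1 i)
          = (fun f : Fin n → ℝ => f i) ∘ Prod.fst := rfl
      rw [e, ← Measure.map_map (measurable_pi_apply i) measurable_fst, hfst]
      exact map_eval_pi' μ i
    have hmarg2 : ∀ i, π.map (fun q : (Fin n → ℝ) × (Fin n → ℝ) => q.2 i) = ν i := by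
      intro i
      have e : (fun q : (Fin n → ℝ) × (Fin n → ℝ) => q.2 i)
          = (fun f : Fin n → ℝ => f i) ∘ Prod.snd := rfl
      rw [e, ← Measure.map_map (measurable_pi_apply i) measurable_snd, hsnd]
      exact map_eval_pi' ν i
    have hint : ∀ i, Integrable (fun q : (Fin n → ℝ) × (Fin n → ℝ) => (q.1 i - q.2 i) ^ 2) π :=
      fun i => integrable_cost (hμ2 i) (hν2 i) π
        ((measurable_pi_apply i).comp measurable_fst)
        ((measurable_pi_apply i).comp measurable_snd) (hmarg1 i) (hmarg2 i)
    rw [integral_finset_sum _ (fun i _ => hint i)]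
    refine Finset.sum_le_sum fun i _ => ?_
    have hfsti : (π.map (m i)).map Prod.fst = μ i := by
      rw [Measure.map_map measurable_fst (hm i)]; exact hmarg1 i
    have hsndi : (π.map (m i)).map Prod.snd = ν i := by
      rw [Measure.map_map measurable_snd (hm i)]; exact hmarg2 i
    have heq : ∫ q, (q.1 i - q.2 i) ^ 2 ∂π = ∫ q : ℝ × ℝ, (q.1 - q.2) ^ 2 ∂(π.map (m i)) :=
      (integral_map (hm i).aemeasurable
        ((measurable_fst.sub measurable_snd).pow_const 2).aestronglyMeasurable).symm
    rw [heq]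
    exact csInf_le (hSiB i)
      ⟨π.map (m i), Measure.isProbabilityMeasure_map (hm i).aemeasurable, hfsti, hsndi, rfl⟩
end

section
/- For any coupling π of probability measures μ, ν on ℝ with quantile functions F_μ⁻¹, F_ν⁻¹, the comonotone coupling lower bound holds: ∫ |x − y|² dπ(x,y) ≥ ∫₀¹ (F_μ⁻¹(u) − F_ν⁻¹(u))² du. -/
/-!
Expanding the square, both sides share the marginal terms `∫ x² dμ + ∫ y² dν`, so it suffices to
show that the comonotone coupling, the law of `(F_μ⁻¹(U), F_ν⁻¹(U))` for `U` uniform on `(0, 1)`,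
maximizes `∫ xy` among couplings. Integrating
`xy = ∬ (1_{s<x} - 1_{s<0}) (1_{t<y} - 1_{t<0}) ds dt` against a coupling `π` (Hoeffding) writes
`∫ xy dπ` as `∬ π((s, ∞) × (t, ∞)) ds dt` plus terms that only depend on the marginals. The Fréchet
bound `π((s, ∞) × (t, ∞)) ≤ min (μ (s, ∞)) (ν (t, ∞))` is attained by the comonotone coupling,
because the superlevel sets of two quantile functions are nested.
-/

open MeasureTheory

/-- The CDF of a measure on `ℝ`. -/
noncomputable def cdfOf (μ : Measure ℝ) : ℝ → ℝ := fun x => (μ (Set.Iic x)).toReal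

/-- The quantile function (left-continuous generalized inverse CDF) of a measure
on `ℝ`. -/
noncomputable def quantile (μ : Measure ℝ) : ℝ → ℝ :=
  fun v => sInf {x : ℝ | v ≤ cdfOf μ x}

open Set Filter Function ProbabilityTheory

lemma measure_restrict_preimage_Ioi_inter_eq_min {α : Type*} [MeasurableSpace α] [LinearOrder α]
    (m : Measure α) {S : Set α} (hS : MeasurableSet S) {f g : α → ℝ}
    (hf : MonotoneOn f S) (hg : MonotoneOn g S) (s t : ℝ) :
    m.restrict S (f ⁻¹' Ioi s ∩ g ⁻¹' Ioi t)
      = min (m.restrict S (f ⁻¹' Ioi s)) (m.restrict S (g ⁻¹' Ioi t)) := by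
  -- superlevel sets of functions monotone on `S` are nested inside `S`
  have hnested : f ⁻¹' Ioi s ∩ S ⊆ g ⁻¹' Ioi t ∨ g ⁻¹' Ioi t ∩ S ⊆ f ⁻¹' Ioi s := by
    by_contra! h
    obtain ⟨u, ⟨hfu, huS⟩, hgu⟩ := not_subset.1 h.1
    obtain ⟨v, ⟨hgv, hvS⟩, hfv⟩ := not_subset.1 h.2
    rcases le_total u v with huv | hvu
    · exact hfv (hfu.trans_le (hf huS hvS huv))
    · exact hgu (hgv.trans_le (hg hvS huS hvu))
  simp only [Measure.restrict_apply' hS]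
  rcases hnested with hsub | hsub
  · have hA : f ⁻¹' Ioi s ∩ g ⁻¹' Ioi t ∩ S = f ⁻¹' Ioi s ∩ S := by
      rw [inter_right_comm]; exact inter_eq_left.2 hsub
    rw [hA, min_eq_left (measure_mono (subset_inter hsub inter_subset_right))]
  · have hB : f ⁻¹' Ioi s ∩ g ⁻¹' Ioi t ∩ S = g ⁻¹' Ioi t ∩ S := by
      rw [inter_comm (f ⁻¹' _), inter_right_comm]; exact inter_eq_left.2 hsub
    rw [hB, min_eq_right (measure_mono (subset_inter hsub inter_subset_right))]

lemma measure_prod_le_min_map {α β : Type*} [MeasurableSpace α] [MeasurableSpace β]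
    (ρ : Measure (α × β)) {S : Set α} {T : Set β} (hS : MeasurableSet S) (hT : MeasurableSet T) :
    ρ (S ×ˢ T) ≤ min (ρ.map Prod.fst S) (ρ.map Prod.snd T) := by
  rw [Measure.map_apply measurable_fst hS, Measure.map_apply measurable_snd hT]
  exact le_min (measure_mono (prod_subset_preimage_fst S T))
    (measure_mono (prod_subset_preimage_snd S T))

lemma integral_indicator_sub_mul_indicator_sub {α β : Type*} [MeasurableSpace α]
    [MeasurableSpace β] (ρ : Measure (α × β)) [IsFiniteMeasure ρ] {S : Set α} {T : Set β}
    (hS : MeasurableSet S) (hT : MeasurableSet T) (a b : ℝ) :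
    ∫ p, (S.indicator 1 p.1 - a) * (T.indicator 1 p.2 - b) ∂ρ
      = ρ.real (S ×ˢ T) - b * (ρ.map Prod.fst).real S - a * (ρ.map Prod.snd).real T
        + a * b * ρ.real univ := by
  have hexpand : (fun p : α × β => (S.indicator 1 p.1 - a) * (T.indicator 1 p.2 - b))
      = fun p => (S ×ˢ T).indicator 1 p - b * S.indicator 1 p.1 - a * T.indicator 1 p.2
          + a * b := by
    ext ⟨x, y⟩
    rw [indicator_prod_one]
    ring
  have hfst : ∫ p, S.indicator 1 p.1 ∂ρ = (ρ.map Prod.fst).real S := by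
    rw [← integral_indicator_one hS]
    exact (integral_map measurable_fst.aemeasurable
      (measurable_one.indicator hS).aestronglyMeasurable).symm
  have hsnd : ∫ p, T.indicator 1 p.2 ∂ρ = (ρ.map Prod.snd).real T := by
    rw [← integral_indicator_one hT]
    exact (integral_map measurable_snd.aemeasurable
      (measurable_one.indicator hT).aestronglyMeasurable).symm
  have hST : Integrable ((S ×ˢ T).indicator 1) ρ :=
    (integrable_const (1 : ℝ)).indicator (hS.prod hT)
  have hS1 : Integrable (fun p => S.indicator 1 p.1) ρ :=
    (integrable_const (1 : ℝ)).indicator (measurable_fst hS)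
  have hT1 : Integrable (fun p => T.indicator 1 p.2) ρ :=
    (integrable_const (1 : ℝ)).indicator (measurable_snd hT)
  rw [hexpand, integral_add, integral_sub, integral_sub, integral_const_mul, integral_const_mul,
    integral_indicator_one (hS.prod hT), integral_const, smul_eq_mul, mul_comm (ρ.real univ),
    hfst, hsnd]
  exacts [hST, hS1.const_mul b, hST.sub (hS1.const_mul b), hT1.const_mul a,
    (hST.sub (hS1.const_mul b)).sub (hT1.const_mul a), integrable_const _]

section Quantile

variable (μ : Measure ℝ) [IsProbabilityMeasure μ]

lemma cdfOf_eq_cdf : cdfOf μ = cdf μ := by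
  ext x
  rw [cdf_eq_real]
  rfl

lemma quantile_le_iff {u : ℝ} (hu : u ∈ Ioo 0 1) (x : ℝ) :
    quantile μ u ≤ x ↔ u ≤ cdfOf μ x := by
  let S := {x : ℝ | u ≤ cdf μ x}
  have hS_nonempty : S.Nonempty :=
    ((tendsto_cdf_atTop μ).eventually (eventually_ge_nhds hu.2)).exists
  have hS_bdd : BddBelow S := by
    obtain ⟨x₀, hx₀⟩ := ((tendsto_cdf_atBot μ).eventually (eventually_lt_nhds hu.1)).exists
    exact ⟨x₀, fun y hy => le_of_not_ge fun hyx => (hy.trans ((monotone_cdf μ) hyx)).not_gt hx₀⟩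
  -- right continuity of the CDF puts the infimum into `S`
  have hS_mem : sInf S ∈ S := by
    refine ge_of_tendsto (((cdf μ).right_continuous _).tendsto.mono_left
      (nhdsWithin_mono _ Ioi_subset_Ici_self)) (eventually_nhdsWithin_of_forall fun y hy => ?_)
    obtain ⟨z, hz, hzy⟩ := (csInf_lt_iff hS_bdd hS_nonempty).1 hy
    exact hz.trans (monotone_cdf μ hzy.le)
  change sInf {x : ℝ | u ≤ cdfOf μ x} ≤ x ↔ u ≤ cdfOf μ x
  rw [cdfOf_eq_cdf]
  exact ⟨fun h => hS_mem.trans (monotone_cdf μ h), fun h => csInf_le hS_bdd h⟩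

lemma quantile_monotoneOn : MonotoneOn (quantile μ) (Ioo 0 1) := fun _ hu _ hv huv =>
  (quantile_le_iff μ hu _).2 (huv.trans ((quantile_le_iff μ hv _).1 le_rfl))

lemma aemeasurable_quantile : AEMeasurable (quantile μ) (volume.restrict (Ioo 0 1)) :=
  aemeasurable_restrict_of_monotoneOn measurableSet_Ioo (quantile_monotoneOn μ)

lemma cdfOf_le_one (x : ℝ) : cdfOf μ x ≤ 1 := by
  rw [cdfOf_eq_cdf]
  exact cdf_le_one μ x

lemma map_quantile : (volume.restrict (Ioo 0 1)).map (quantile μ) = μ := by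
  refine Measure.ext_of_Iic _ _ fun x => ?_
  have hpre : quantile μ ⁻¹' Iic x ∩ Ioo 0 1 = Iic (cdfOf μ x) ∩ Ioo 0 1 := by
    ext u
    exact and_congr_left fun hu => quantile_le_iff μ hu x
  rw [Measure.map_apply_of_aemeasurable (aemeasurable_quantile μ) measurableSet_Iic,
    Measure.restrict_apply' measurableSet_Ioo, hpre,
    measure_congr ((ae_eq_refl _).inter Ioo_ae_eq_Ioc), Iic_inter_Ioc_of_le (cdfOf_le_one μ x),
    Real.volume_Ioc, sub_zero, cdfOf, ENNReal.ofReal_toReal (measure_ne_top μ _)]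

end Quantile

noncomputable def comonotoneCoupling (μ ν : Measure ℝ) : Measure (ℝ × ℝ) :=
  (volume.restrict (Ioo 0 1)).map fun u => (quantile μ u, quantile ν u)

instance (μ ν : Measure ℝ) : IsFiniteMeasure (comonotoneCoupling μ ν) := by
  unfold comonotoneCoupling; infer_instance

section Comonotone

variable (μ ν : Measure ℝ) [IsProbabilityMeasure μ] [IsProbabilityMeasure ν]

lemma aemeasurable_quantile_prod :
    AEMeasurable (fun u => (quantile μ u, quantile ν u)) (volume.restrict (Ioo 0 1)) :=
  (aemeasurable_quantile μ).prodMk (aemeasurable_quantile ν)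

lemma comonotoneCoupling_map_fst : (comonotoneCoupling μ ν).map Prod.fst = μ := by
  rw [comonotoneCoupling, AEMeasurable.map_map_of_aemeasurable measurable_fst.aemeasurable
    (aemeasurable_quantile_prod μ ν)]
  exact map_quantile μ

lemma comonotoneCoupling_map_snd : (comonotoneCoupling μ ν).map Prod.snd = ν := by
  rw [comonotoneCoupling, AEMeasurable.map_map_of_aemeasurable measurable_snd.aemeasurable
    (aemeasurable_quantile_prod μ ν)]
  exact map_quantile ν

lemma comonotoneCoupling_Ioi_prod_Ioi (s t : ℝ) :
    comonotoneCoupling μ ν (Ioi s ×ˢ Ioi t) = min (μ (Ioi s)) (ν (Ioi t)) := by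
  conv_rhs => rw [← map_quantile μ, ← map_quantile ν,
    Measure.map_apply_of_aemeasurable (aemeasurable_quantile μ) measurableSet_Ioi,
    Measure.map_apply_of_aemeasurable (aemeasurable_quantile ν) measurableSet_Ioi]
  rw [comonotoneCoupling, Measure.map_apply_of_aemeasurable (aemeasurable_quantile_prod μ ν)
    (measurableSet_Ioi.prod measurableSet_Ioi), mk_preimage_prod]
  exact measure_restrict_preimage_Ioi_inter_eq_min _ measurableSet_Ioo
    (quantile_monotoneOn μ) (quantile_monotoneOn ν) s t

lemma integral_comonotoneCoupling {f : ℝ × ℝ → ℝ}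
    (hf : AEStronglyMeasurable f (comonotoneCoupling μ ν)) :
    ∫ p, f p ∂comonotoneCoupling μ ν = ∫ u in Ioo 0 1, f (quantile μ u, quantile ν u) :=
  integral_map (aemeasurable_quantile_prod μ ν) hf

end Comonotone

noncomputable def layer (s x : ℝ) : ℝ := (Ioi s).indicator 1 x - (Ioi s).indicator 1 0

lemma layer_eq_indicator_sub (x : ℝ) :
    (fun s => layer s x) = fun s => (Ico 0 x).indicator 1 s - (Ico x 0).indicator 1 s := by
  ext s
  simp only [layer, indicator_apply, mem_Ioi, mem_Ico, Pi.one_apply]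
  split_ifs <;> grind

lemma abs_layer_eq_indicator_add (x : ℝ) :
    (fun s => |layer s x|) = fun s => (Ico 0 x).indicator 1 s + (Ico x 0).indicator 1 s := by
  ext s
  simp only [layer, indicator_apply, mem_Ioi, mem_Ico, Pi.one_apply]
  split_ifs <;> grind

lemma integrable_indicator_Ico_one (a b : ℝ) : Integrable ((Ico a b).indicator (1 : ℝ → ℝ)) :=
  (integrable_indicator_iff measurableSet_Ico).2 (integrableOn_const measure_Ico_lt_top.ne)

lemma integrable_layer (x : ℝ) : Integrable fun s => layer s x := by
  rw [layer_eq_indicator_sub]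
  exact (integrable_indicator_Ico_one _ _).sub (integrable_indicator_Ico_one _ _)

lemma integral_layer (x : ℝ) : ∫ s, layer s x = x := by
  rw [layer_eq_indicator_sub, integral_sub (integrable_indicator_Ico_one _ _)
    (integrable_indicator_Ico_one _ _), integral_indicator_one measurableSet_Ico,
    integral_indicator_one measurableSet_Ico, Real.volume_real_Ico, Real.volume_real_Ico]
  simp

lemma integral_abs_layer (x : ℝ) : ∫ s, |layer s x| = |x| := by
  rw [abs_layer_eq_indicator_add, integral_add (integrable_indicator_Ico_one _ _)
    (integrable_indicator_Ico_one _ _), integral_indicator_one measurableSet_Ico,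
    integral_indicator_one measurableSet_Ico, Real.volume_real_Ico, Real.volume_real_Ico]
  simp

lemma measurable_layer : Measurable fun p : ℝ × ℝ => layer p.1 p.2 :=
  (measurable_const.indicator (measurableSet_lt measurable_fst measurable_snd)).sub
    (measurable_const.indicator (measurableSet_lt measurable_fst measurable_const))

section Hoeffding

variable (ρ : Measure (ℝ × ℝ))

lemma integrable_layer_mul_layer (h : Integrable (fun p => p.1 * p.2) ρ) :
    Integrable (uncurry fun (p q : ℝ × ℝ) => layer q.1 p.1 * layer q.2 p.2)
      (ρ.prod (volume.prod volume)) := by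
  have hmeas : Measurable (uncurry fun (p q : ℝ × ℝ) => layer q.1 p.1 * layer q.2 p.2) :=
    (measurable_layer.comp (measurable_snd.fst.prodMk measurable_fst.fst)).mul
      (measurable_layer.comp (measurable_snd.snd.prodMk measurable_fst.snd))
  refine (integrable_prod_iff hmeas.aestronglyMeasurable).2
    ⟨ae_of_all _ fun p => (integrable_layer p.1).mul_prod (integrable_layer p.2), ?_⟩
  have hnorm (p : ℝ × ℝ) :
      ∫ q : ℝ × ℝ, ‖layer q.1 p.1 * layer q.2 p.2‖ ∂volume.prod volume = ‖p.1 * p.2‖ := by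
    simp only [norm_mul, Real.norm_eq_abs]
    rw [integral_prod_mul (fun s => |layer s p.1|) (fun t => |layer t p.2|),
      integral_abs_layer, integral_abs_layer]
  simpa only [uncurry_apply_pair, hnorm] using h.norm

lemma integral_fst_mul_snd_eq_integral_layer [SFinite ρ]
    (h : Integrable (fun p => p.1 * p.2) ρ) :
    ∫ p, p.1 * p.2 ∂ρ
      = ∫ q : ℝ × ℝ, ∫ p, layer q.1 p.1 * layer q.2 p.2 ∂ρ ∂volume.prod volume := by
  rw [← integral_integral_swap (integrable_layer_mul_layer ρ h)]
  congr 1 with p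
  rw [integral_prod_mul (fun s => layer s p.1) (fun t => layer t p.2), integral_layer,
    integral_layer]

lemma integrable_integral_layer [SFinite ρ] (h : Integrable (fun p => p.1 * p.2) ρ) :
    Integrable (fun q : ℝ × ℝ => ∫ p, layer q.1 p.1 * layer q.2 p.2 ∂ρ) (volume.prod volume) :=
  (integrable_layer_mul_layer ρ h).integral_prod_right

end Hoeffding

lemma integral_fst_mul_snd_le_of_measure_Ioi_prod_Ioi_le (ρ ρ' : Measure (ℝ × ℝ))
    [IsFiniteMeasure ρ] [IsFiniteMeasure ρ'] (hfst : ρ.map Prod.fst = ρ'.map Prod.fst)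
    (hsnd : ρ.map Prod.snd = ρ'.map Prod.snd) (h : Integrable (fun p => p.1 * p.2) ρ)
    (h' : Integrable (fun p => p.1 * p.2) ρ')
    (hle : ∀ s t, ρ (Ioi s ×ˢ Ioi t) ≤ ρ' (Ioi s ×ˢ Ioi t)) :
    ∫ p, p.1 * p.2 ∂ρ ≤ ∫ p, p.1 * p.2 ∂ρ' := by
  have huniv : ρ.real univ = ρ'.real univ := by
    simpa [map_measureReal_apply measurable_fst MeasurableSet.univ] using
      congrArg (fun m => m.real univ) hfst
  rw [integral_fst_mul_snd_eq_integral_layer ρ h, integral_fst_mul_snd_eq_integral_layer ρ' h']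
  refine integral_mono (integrable_integral_layer ρ h) (integrable_integral_layer ρ' h')
    fun q => ?_
  have hjoint : ρ.real (Ioi q.1 ×ˢ Ioi q.2) ≤ ρ'.real (Ioi q.1 ×ˢ Ioi q.2) :=
    ENNReal.toReal_mono (measure_ne_top ρ' _) (hle q.1 q.2)
  simp only [layer]
  rw [integral_indicator_sub_mul_indicator_sub ρ measurableSet_Ioi measurableSet_Ioi,
    integral_indicator_sub_mul_indicator_sub ρ' measurableSet_Ioi measurableSet_Ioi, hfst, hsnd,
    huniv]
  linarith

lemma integrable_fst_mul_snd (ρ : Measure (ℝ × ℝ))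
    (h1 : Integrable (fun x => x ^ 2) (ρ.map Prod.fst))
    (h2 : Integrable (fun x => x ^ 2) (ρ.map Prod.snd)) :
    Integrable (fun p => p.1 * p.2) ρ := by
  have hfst : MemLp (fun p : ℝ × ℝ => p.1) 2 ρ :=
    (memLp_two_iff_integrable_sq measurable_fst.aestronglyMeasurable).2
      (h1.comp_measurable measurable_fst)
  have hsnd : MemLp (fun p : ℝ × ℝ => p.2) 2 ρ :=
    (memLp_two_iff_integrable_sq measurable_snd.aestronglyMeasurable).2
      (h2.comp_measurable measurable_snd)
  exact hfst.integrable_mul hsnd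

lemma integral_sub_sq_eq (ρ : Measure (ℝ × ℝ))
    (h1 : Integrable (fun x => x ^ 2) (ρ.map Prod.fst))
    (h2 : Integrable (fun x => x ^ 2) (ρ.map Prod.snd)) :
    ∫ p, (p.1 - p.2) ^ 2 ∂ρ
      = ∫ x, x ^ 2 ∂ρ.map Prod.fst + ∫ y, y ^ 2 ∂ρ.map Prod.snd - 2 * ∫ p, p.1 * p.2 ∂ρ := by
  have h1' : Integrable (fun p : ℝ × ℝ => p.1 ^ 2) ρ := h1.comp_measurable measurable_fst
  have h2' : Integrable (fun p : ℝ × ℝ => p.2 ^ 2) ρ := h2.comp_measurable measurable_snd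
  have h12 := (integrable_fst_mul_snd ρ h1 h2).const_mul 2
  rw [integral_map measurable_fst.aemeasurable (by fun_prop),
    integral_map measurable_snd.aemeasurable (by fun_prop), ← integral_add h1' h2',
    ← integral_const_mul, ← integral_sub (f := fun p => p.1 ^ 2 + p.2 ^ 2) (h1'.add h2') h12]
  exact integral_congr_ae (ae_of_all _ fun p => by ring)

/-- For any coupling `π` of Borel probability measures `μ, ν` on `ℝ` with finite
second moments, the comonotone coupling lower bound holds:
`∫ |x - y|² dπ ≥ ∫₀¹ (F_μ⁻¹(u) - F_ν⁻¹(u))² du`. -/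
theorem comonotone_coupling_lower_bound (μ ν : Measure ℝ)
    (hμ : IsProbabilityMeasure μ) (hν : IsProbabilityMeasure ν)
    (hμ2 : Integrable (fun x => x ^ 2) μ) (hν2 : Integrable (fun x => x ^ 2) ν)
    (π : Measure (ℝ × ℝ)) (hπ : IsProbabilityMeasure π)
    (hfst : π.map Prod.fst = μ) (hsnd : π.map Prod.snd = ν) :
    ∫ u in Set.Ioo (0 : ℝ) 1, (quantile μ u - quantile ν u) ^ 2
      ≤ ∫ p, (p.1 - p.2) ^ 2 ∂π := by
  have hcomo_fst := comonotoneCoupling_map_fst μ ν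
  have hcomo_snd := comonotoneCoupling_map_snd μ ν
  have hπ_int := integrable_fst_mul_snd π (by rwa [hfst]) (by rwa [hsnd])
  have hcomo_int := integrable_fst_mul_snd _ (by rwa [hcomo_fst]) (by rwa [hcomo_snd])
  have hcross : ∫ p, p.1 * p.2 ∂π ≤ ∫ p, p.1 * p.2 ∂comonotoneCoupling μ ν :=
    integral_fst_mul_snd_le_of_measure_Ioi_prod_Ioi_le _ _ (hfst.trans hcomo_fst.symm)
      (hsnd.trans hcomo_snd.symm) hπ_int hcomo_int fun s t =>
        (measure_prod_le_min_map π measurableSet_Ioi measurableSet_Ioi).trans_eq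
          (by rw [hfst, hsnd, comonotoneCoupling_Ioi_prod_Ioi])
  rw [← integral_comonotoneCoupling μ ν (f := fun p => (p.1 - p.2) ^ 2) (by fun_prop),
    integral_sub_sq_eq π (by rwa [hfst]) (by rwa [hsnd]),
    integral_sub_sq_eq _ (by rwa [hcomo_fst]) (by rwa [hcomo_snd]), hfst, hsnd, hcomo_fst,
    hcomo_snd]
  linarith
end
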